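/- The loop σ : ℝ/ℤ → Ran_{≤2}(S¹) defined by σ(t) = {e^{2πit}, e^{2πi(t+1/2)}} (i.e., the pair of antipodal points rotating once around) is null-homotopic in Ran_{≤3}(S¹): the composite ℝ/ℤ → Ran_{≤2}(S¹) ↪ Ran_{≤3}(S¹) is freely homotopic to a constant loop. -/

import Mathlib

open Set

/-- `Ran_{≤ n}(X)`: nonempty finite subsets of `X` of cardinality at most `n`. -/
def RanLE (n : ℕ) (X : Type u) [TopologicalSpace X] : Type u :=
  {s : Set X // s.Finite ∧ s.Nonempty ∧ s.ncard ≤ n}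

variable {X : Type*} [TopologicalSpace X]

/-- The quotient map `X^n → Ran_{≤ n}(X)`, `(x₁,…,xₙ) ↦ {x₁,…,xₙ}` (restricted to
tuples with nonempty range, which is all of them when `n > 0`). -/
def ranQuot (n : ℕ) (X : Type*) [TopologicalSpace X]
    (f : {f : Fin n → X // (Set.range f).Nonempty}) : RanLE n X :=
  ⟨Set.range f.1, Set.finite_range _, f.2, by
    classical
    calc (Set.range f.1).ncard = (Finset.univ.image f.1 : Finset X).card := by
          rw [← Set.ncard_coe_finset]; congr 1; simp
      _ ≤ (Finset.univ : Finset (Fin n)).card := Finset.card_image_le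
      _ = n := by simp⟩

/-- `Ran_{≤ n}(X)` carries the quotient topology from `X^n`. -/
instance (n : ℕ) : TopologicalSpace (RanLE n X) :=
  TopologicalSpace.coinduced (ranQuot n X) inferInstance

/-- The natural inclusion `Ran_{≤ m}(X) → Ran_{≤ n}(X)` for `m ≤ n`. -/
noncomputable def ranIncl {m n : ℕ} (h : m ≤ n) : RanLE m X → RanLE n X :=
  fun s => ⟨s.1, s.2.1, s.2.2.1, s.2.2.2.trans h⟩

/-!
Write the circle additively as `𝕋 = ℝ/pℤ`. A map `x ↦ n • x + d x` with `d : 𝕋 → ℝ`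
continuous (a strand of winding `n`) can be moved freely by the straight-line homotopy on `d`,
so a configuration of three strands deforms as long as the windings are kept. Since
`‖z‖ = ±z` in `𝕋`, the strands `k • x ± ‖m • x‖` trace, as a set, the same pair as the
strands `(k + m) • x` and `(k - m) • x`; two strands of equal winding `k` can thus be traded
for windings `k ± m`. The antipodal pair `{x, x + 1/2}` is given by the three strands
`x, x + 1/2, x` of winding `1`, and the windings go (`k ± m` standing for a traded pair)
`(1, 1, 1) ~ (1 ± 2, 1) = (2 ± 1, -1) ~ (2, 2, -1) = (-1, -1, 2) ~ (-1 ± 1, 2)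
= (0 ± 2, 0) ~ (0, 0, 0)`, a constant configuration.
-/

open ContinuousMap

variable {Y : Type*} [TopologicalSpace Y]

theorem continuous_ranQuot (n : ℕ) : Continuous (ranQuot n X) := continuous_coinduced_rng

namespace RanLE

noncomputable def map (n : ℕ) (g : C(X, Y)) : C(RanLE n X, RanLE n Y) where
  toFun s := ⟨g '' s.1, s.2.1.image g, s.2.2.1.image g, (ncard_image_le s.2.1).trans s.2.2.2⟩
  continuous_toFun := by
    refine continuous_coinduced_dom.2 ?_
    have hg : Continuous fun v : {v : Fin n → X // (range v).Nonempty} =>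
        ranQuot n Y ⟨g ∘ v.1, range_comp g v.1 ▸ v.2.image g⟩ :=
      (continuous_ranQuot n).comp <| Continuous.subtype_mk (continuous_pi fun i =>
        g.continuous.comp ((continuous_apply i).comp continuous_subtype_val)) _
    convert hg using 2 with v
    exact Subtype.ext (range_comp g v.1).symm

@[simp]
theorem coe_map (n : ℕ) (g : C(X, Y)) (s : RanLE n X) : (map n g s).1 = g '' s.1 :=
  rfl

noncomputable def triple (a b c : X) : RanLE 3 X := ranQuot 3 X ⟨![a, b, c], a, 0, rfl⟩

theorem coe_triple (a b c : X) : (triple a b c).1 = {a, b, c} := by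
  show range ![a, b, c] = {a, b, c}
  rw [Matrix.range_cons, Matrix.range_cons, Matrix.range_cons_empty, singleton_union,
    singleton_union]

theorem triple_eq_triple {a b c a' b' c' : X} (h : ({a, b, c} : Set X) = {a', b', c'}) :
    triple a b c = triple a' b' c' :=
  Subtype.ext (by rw [coe_triple, coe_triple, h])

theorem continuous_triple : Continuous fun q : X × X × X => triple q.1 q.2.1 q.2.2 := by
  refine (continuous_ranQuot 3).comp (Continuous.subtype_mk (continuous_pi fun i => ?_) _)
  fin_cases i <;> fun_prop

end RanLE

namespace ContinuousMap

instance : @Trans C(Y, X) C(Y, X) C(Y, X) Homotopic Homotopic Homotopic :=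
  ⟨fun h₁ h₂ => h₁.trans h₂⟩

noncomputable def ranTriple (a b c : C(Y, X)) : C(Y, RanLE 3 X) :=
  (⟨_, RanLE.continuous_triple⟩ : C(X × X × X, RanLE 3 X)).comp (a.prodMk (b.prodMk c))

@[simp]
theorem ranTriple_apply (a b c : C(Y, X)) (y : Y) :
    ranTriple a b c y = RanLE.triple (a y) (b y) (c y) :=
  rfl

theorem Homotopic.ranTriple {a b c a' b' c' : C(Y, X)} (ha : a.Homotopic a')
    (hb : b.Homotopic b') (hc : c.Homotopic c') :
    (ranTriple a b c).Homotopic (ranTriple a' b' c') :=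
  (Homotopic.refl _).comp (ha.prodMk (hb.prodMk hc))

theorem ranTriple_eq_ranTriple {a b c a' b' c' : C(Y, X)}
    (h : ∀ y, ({a y, b y, c y} : Set X) = {a' y, b' y, c' y}) :
    ranTriple a b c = ranTriple a' b' c' :=
  ext fun y => RanLE.triple_eq_triple (h y)

end ContinuousMap

namespace AddCircle

variable {p : ℝ}

theorem eq_coe_norm_or_eq_neg (z : AddCircle p) : z = ‖z‖ ∨ z = -(‖z‖ : AddCircle p) := by
  obtain ⟨t, rfl⟩ := QuotientAddGroup.mk_surjective z
  have hz : ((t - round (p⁻¹ * t) * p : ℝ) : AddCircle p) = t := by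
    rw [coe_sub, sub_eq_self, coe_eq_zero_iff]
    exact ⟨round (p⁻¹ * t), zsmul_eq_mul _ _⟩
  rw [norm_eq]
  rcases abs_choice (t - round (p⁻¹ * t) * p) with h | h
  · left; rw [h, hz]
  · right; rw [h, coe_neg, neg_neg, hz]

theorem insert_zsmul_add_sub_norm (k m : ℤ) (x y : AddCircle p) :
    ({k • x + ‖m • x‖, k • x - ‖m • x‖, y} : Set (AddCircle p)) =
      {(k + m) • x, (k - m) • x, y} := by
  rw [add_zsmul, sub_zsmul, ← sub_eq_add_neg]
  rcases eq_coe_norm_or_eq_neg (m • x) with h | h <;> generalize ‖m • x‖ = r at h ⊢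
  · rw [h]
  · rw [h, ← sub_eq_add_neg, sub_neg_eq_add, insert_comm]

def strand (n : ℤ) (d : C(AddCircle p, ℝ)) : C(AddCircle p, AddCircle p) :=
  ⟨fun x => n • x + d x,
    (continuous_zsmul n).add ((AddCircle.continuous_mk' p).comp d.continuous)⟩

@[simp]
theorem strand_apply (n : ℤ) (d : C(AddCircle p, ℝ)) (x : AddCircle p) :
    strand n d x = n • x + d x :=
  rfl

theorem strand_homotopic (n : ℤ) (d d' : C(AddCircle p, ℝ)) :
    (strand n d).Homotopic (strand n d') :=
  ⟨{ toFun := fun q => n • q.2 + ↑((1 - q.1 : ℝ) * d q.2 + q.1 * d' q.2)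
     continuous_toFun := by
       refine ((continuous_zsmul n).comp continuous_snd).add
         ((AddCircle.continuous_mk' p).comp ?_)
       fun_prop
     map_zero_left := by simp
     map_one_left := by simp }⟩

noncomputable def normZSMul (m : ℤ) : C(AddCircle p, ℝ) := ⟨fun x => ‖m • x‖, by fun_prop⟩

theorem ranTriple_strand_homotopic (n₁ n₂ n₃ : ℤ) (d₁ d₂ d₃ e₁ e₂ e₃ : C(AddCircle p, ℝ)) :
    (ranTriple (strand n₁ d₁) (strand n₂ d₂) (strand n₃ d₃)).Homotopic
      (ranTriple (strand n₁ e₁) (strand n₂ e₂) (strand n₃ e₃)) :=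
  (strand_homotopic n₁ d₁ e₁).ranTriple (strand_homotopic n₂ d₂ e₂) (strand_homotopic n₃ d₃ e₃)

theorem ranTriple_strand_split (k m n : ℤ) (d : C(AddCircle p, ℝ)) :
    ranTriple (strand k (normZSMul m)) (strand k (-normZSMul m)) (strand n d) =
      ranTriple (strand (k + m) 0) (strand (k - m) 0) (strand n d) :=
  ranTriple_eq_ranTriple fun x => by
    simpa [normZSMul, sub_eq_add_neg] using insert_zsmul_add_sub_norm k m x (strand n d x)

theorem nullhomotopic_ranTriple_strand_one (d₁ d₂ d₃ : C(AddCircle p, ℝ)) :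
    (ranTriple (strand 1 d₁) (strand 1 d₂) (strand 1 d₃)).Nullhomotopic := by
  refine ⟨RanLE.triple 0 0 0, ?_⟩
  calc Homotopic (ranTriple (strand 1 d₁) (strand 1 d₂) (strand 1 d₃))
        (ranTriple (strand 1 (normZSMul 2)) (strand 1 (-normZSMul 2)) (strand 1 0)) :=
        ranTriple_strand_homotopic ..
    _ = ranTriple (strand 3 0) (strand (-1) 0) (strand 1 0) := ranTriple_strand_split 1 2 1 0
    _ = ranTriple (strand 3 0) (strand 1 0) (strand (-1) 0) :=
        ranTriple_eq_ranTriple fun _ => congrArg (insert _) (pair_comm _ _)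
    _ = ranTriple (strand 2 (normZSMul 1)) (strand 2 (-normZSMul 1)) (strand (-1) 0) :=
        (ranTriple_strand_split 2 1 (-1) 0).symm
    Homotopic _ (ranTriple (strand 2 0) (strand 2 0) (strand (-1) 0)) :=
        ranTriple_strand_homotopic ..
    _ = ranTriple (strand (-1) 0) (strand (-1) 0) (strand 2 0) :=
        ranTriple_eq_ranTriple fun _ => by rw [insert_idem, insert_idem, pair_comm]
    Homotopic _ (ranTriple (strand (-1) (normZSMul 1)) (strand (-1) (-normZSMul 1))
        (strand 2 0)) :=
        ranTriple_strand_homotopic ..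
    _ = ranTriple (strand 0 0) (strand (-2) 0) (strand 2 0) := ranTriple_strand_split (-1) 1 2 0
    _ = ranTriple (strand 2 0) (strand (-2) 0) (strand 0 0) :=
        ranTriple_eq_ranTriple fun _ => by rw [insert_comm, pair_comm, insert_comm]
    _ = ranTriple (strand 0 (normZSMul 2)) (strand 0 (-normZSMul 2)) (strand 0 0) :=
        (ranTriple_strand_split 0 2 0 0).symm
    Homotopic _ (ranTriple (strand 0 0) (strand 0 0) (strand 0 0)) :=
        ranTriple_strand_homotopic ..
    _ = const _ (RanLE.triple 0 0 0) := by ext1; simp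

end AddCircle

open Real in
/-- The loop of antipodal pairs `t ↦ {e^{2πit}, e^{2πi(t+1/2)}}`, a loop
`ℝ/ℤ → Ran_{≤2}(S¹)` (here with values of cardinality at most 2), becomes
null-homotopic in `Ran_{≤3}(S¹)`: as a map to `Ran_{≤3}(S¹)` it is freely homotopic
to a constant loop. -/
theorem antipodal_pair_loop_nullhomotopic
    (f : C(AddCircle (1 : ℝ), RanLE 3 Circle))
    (hf : ∀ t : ℝ, (f (t : AddCircle (1 : ℝ))).1 =
      {Circle.exp (2 * π * t), Circle.exp (2 * π * (t + 1 / 2))}) :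
    ∃ c : RanLE 3 Circle, ContinuousMap.Homotopic f (ContinuousMap.const _ c) := by
  have hf_eq : f = (RanLE.map 3 ⟨_, AddCircle.continuous_toCircle⟩).comp (ranTriple
      (AddCircle.strand 1 0) (AddCircle.strand 1 (const _ (1 / 2))) (AddCircle.strand 1 0)) := by
    ext1 x
    induction x using QuotientAddGroup.induction_on with | H t => ?_
    refine Subtype.ext ?_
    simp only [hf, comp_apply, ranTriple_apply, AddCircle.strand_apply, RanLE.coe_map,
      RanLE.coe_triple, one_zsmul, ContinuousMap.zero_apply, const_apply, ← AddCircle.coe_add,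
      add_zero, image_insert_eq, image_singleton, coe_mk, AddCircle.toCircle_apply_mk, div_one]
    rw [insert_comm, pair_eq_singleton, pair_comm]
  rw [hf_eq]
  exact (AddCircle.nullhomotopic_ranTriple_strand_one _ _ _).comp_right _
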